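/- arXiv:2404.02030 — 3 statements merged into one kernel-verified Lean document; each statement's English description precedes it below -/
import Mathlib

section
/- Suppose ℋ is a hereditary 3-graph property with VC₂(ℋ)=∞. Then for every tripartite 3-graph H=(A∪B∪C,E) (with E⊆K₃[A,B,C]), there is a 3-graph H'∈ℋ with vertex set V(H')=A∪B∪C whose edge set satisfies E(H')∩K₃[A,B,C]=E. -/
open scoped Classical
open Finset

set_option maxHeartbeats 1000000

/-- A 3-uniform hypergraph on a finite vertex set of naturals. -/
structure ThreeGraph where
  verts : Finset ℕ
  edges : Finset (Finset ℕ)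
  edges_sub : ∀ e ∈ edges, e ⊆ verts ∧ e.card = 3

/-- The set `Ē` of ordered triples corresponding to edges. -/
def ThreeGraph.obar (H : ThreeGraph) : Finset (ℕ × ℕ × ℕ) :=
  (H.verts ×ˢ H.verts ×ˢ H.verts).filter fun p => ({p.1, p.2.1, p.2.2} : Finset ℕ) ∈ H.edges

/-- A bigraph `(U,V;E)`. -/
structure Bigraph where
  left : Finset ℕ
  right : Finset ℕ
  edges : Finset (ℕ × ℕ)
  edges_sub : edges ⊆ left ×ˢ right

noncomputable def Bigraph.density (B : Bigraph) : ℝ :=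
  (B.edges.card : ℝ) / ((B.left.card : ℝ) * (B.right.card : ℝ))

noncomputable def Bigraph.gfun (B : Bigraph) (u w : ℕ) : ℝ :=
  if (u, w) ∈ B.edges then 1 - B.density else -B.density

noncomputable def Bigraph.devSum (B : Bigraph) : ℝ :=
  ∑ u₀ ∈ B.left, ∑ u₁ ∈ B.left, ∑ w₀ ∈ B.right, ∑ w₁ ∈ B.right,
    B.gfun u₀ w₀ * B.gfun u₀ w₁ * B.gfun u₁ w₀ * B.gfun u₁ w₁

/-- `B` has `dev₂(ε,d)`. -/
def Bigraph.dev2 (B : Bigraph) (ε d : ℝ) : Prop :=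
  |B.density - d| ≤ ε ∧ B.devSum ≤ ε * (B.left.card : ℝ) ^ 2 * (B.right.card : ℝ) ^ 2

/-- `B` has `dev₂(ε)`, i.e. `dev₂(ε, d_B)`. -/
def Bigraph.dev2self (B : Bigraph) (ε : ℝ) : Prop := B.dev2 ε B.density

noncomputable def Bigraph.dBetween (B : Bigraph) (X Y : Finset ℕ) : ℝ :=
  ((B.edges ∩ X ×ˢ Y).card : ℝ) / ((X.card : ℝ) * (Y.card : ℝ))

/-- `ε`-regularity for a bigraph. -/
def Bigraph.EpsRegular (B : Bigraph) (ε : ℝ) : Prop :=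
  ∀ X ⊆ B.left, ∀ Y ⊆ B.right,
    ε * (B.left.card : ℝ) ≤ (X.card : ℝ) → ε * (B.right.card : ℝ) ≤ (Y.card : ℝ) →
      |B.density - B.dBetween X Y| ≤ ε

/-- Irreducibility: distinct vertices have distinct neighborhoods, on both sides. -/
def Bigraph.Irreducible (B : Bigraph) : Prop :=
  (∀ u ∈ B.left, ∀ u' ∈ B.left, (∀ v : ℕ, (u, v) ∈ B.edges ↔ (u', v) ∈ B.edges) → u = u') ∧
  (∀ v ∈ B.right, ∀ v' ∈ B.right, (∀ u : ℕ, (u, v) ∈ B.edges ↔ (u, v') ∈ B.edges) → v = v')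

def Bigraph.leftNbhd (B : Bigraph) (v : ℕ) : Finset ℕ :=
  B.left.filter fun u => (u, v) ∈ B.edges

/-- `B` contains an induced copy of the abstract bigraph on `Fin k × Fin k` given by `F`. -/
def Bigraph.HasInducedPattern (B : Bigraph) (k : ℕ) (F : Fin k → Fin k → Prop) : Prop :=
  ∃ u v : Fin k → ℕ, (∀ a, u a ∈ B.left) ∧ (∀ b, v b ∈ B.right) ∧
    ∀ a b, ((u a, v b) ∈ B.edges ↔ F a b)

/-- A triad `(X,Y,Z; E_XY, E_YZ, E_XZ)`. -/
structure Triad where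
  X : Finset ℕ
  Y : Finset ℕ
  Z : Finset ℕ
  EXY : Finset (ℕ × ℕ)
  EYZ : Finset (ℕ × ℕ)
  EXZ : Finset (ℕ × ℕ)
  hXY : EXY ⊆ X ×ˢ Y
  hYZ : EYZ ⊆ Y ×ˢ Z
  hXZ : EXZ ⊆ X ×ˢ Z

def Triad.K3 (G : Triad) : Finset (ℕ × ℕ × ℕ) :=
  (G.X ×ˢ G.Y ×ˢ G.Z).filter fun p =>
    (p.1, p.2.1) ∈ G.EXY ∧ (p.2.1, p.2.2) ∈ G.EYZ ∧ (p.1, p.2.2) ∈ G.EXZ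

def Triad.bXY (G : Triad) : Bigraph := ⟨G.X, G.Y, G.EXY, G.hXY⟩
def Triad.bYZ (G : Triad) : Bigraph := ⟨G.Y, G.Z, G.EYZ, G.hYZ⟩
def Triad.bXZ (G : Triad) : Bigraph := ⟨G.X, G.Z, G.EXZ, G.hXZ⟩

/-- `d_H(G)` where the (tri)graph is given by its set `R` of ordered triples. -/
noncomputable def relDensity (R : Finset (ℕ × ℕ × ℕ)) (G : Triad) : ℝ :=
  ((R ∩ G.K3).card : ℝ) / (G.K3.card : ℝ)

noncomputable def hFun (R : Finset (ℕ × ℕ × ℕ)) (G : Triad) (x y z : ℕ) : ℝ :=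
  if (x, y, z) ∈ G.K3 then
    (if (x, y, z) ∈ R then 1 - relDensity R G else -(relDensity R G))
  else 0

noncomputable def devSum3 (R : Finset (ℕ × ℕ × ℕ)) (G : Triad) : ℝ :=
  ∑ u₀ ∈ G.X, ∑ u₁ ∈ G.X, ∑ w₀ ∈ G.Y, ∑ w₁ ∈ G.Y, ∑ z₀ ∈ G.Z, ∑ z₁ ∈ G.Z,
    hFun R G u₀ w₀ z₀ * hFun R G u₀ w₀ z₁ * hFun R G u₀ w₁ z₀ * hFun R G u₀ w₁ z₁ *
      hFun R G u₁ w₀ z₀ * hFun R G u₁ w₀ z₁ * hFun R G u₁ w₁ z₀ * hFun R G u₁ w₁ z₁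

/-- `(H,G)` has `dev_{2,3}(ε₁,ε₂)`, where the trigraph/3-graph is given by triples `R`. -/
def dev23 (R : Finset (ℕ × ℕ × ℕ)) (G : Triad) (ε₁ ε₂ : ℝ) : Prop :=
  ∃ dXY dYZ dXZ : ℝ, 0 < dXY ∧ 0 < dYZ ∧ 0 < dXZ ∧
    G.bXY.dev2 ε₂ dXY ∧ G.bXZ.dev2 ε₂ dXZ ∧ G.bYZ.dev2 ε₂ dYZ ∧
    devSum3 R G ≤ ε₁ * dXY ^ 4 * dYZ ^ 4 * dXZ ^ 4 *
      (G.X.card : ℝ) ^ 2 * (G.Y.card : ℝ) ^ 2 * (G.Z.card : ℝ) ^ 2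

/-- `G` is `μ`-homogeneous with respect to the triples `R`: `d_H(G) ∈ [0,μ) ∪ (1-μ,1]`. -/
def homTriad (R : Finset (ℕ × ℕ × ℕ)) (G : Triad) (μ : ℝ) : Prop :=
  relDensity R G < μ ∨ 1 - μ < relDensity R G

/-- A `(t,ℓ)`-decomposition of `V`, with part-indices `ι` and pair-indices `κ`. -/
structure Decomp (V : Finset ℕ) (ι κ : Type) where
  part : ι → Finset ℕ
  part_sub : ∀ i, part i ⊆ V
  part_disj : ∀ i j, i ≠ j → Disjoint (part i) (part j)
  part_cover : ∀ x ∈ V, ∃ i, x ∈ part i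
  pairs : ι → ι → κ → Finset (ℕ × ℕ)
  pairs_sub : ∀ i j α, pairs i j α ⊆ part i ×ˢ part j
  pairs_disj : ∀ i j α β, α ≠ β → Disjoint (pairs i j α) (pairs i j β)
  pairs_cover : ∀ i j, ∀ p ∈ part i ×ˢ part j, ∃ α, p ∈ pairs i j α

def Decomp.pairBG {V : Finset ℕ} {ι κ : Type} (P : Decomp V ι κ) (i j : ι) (α : κ) : Bigraph :=
  ⟨P.part i, P.part j, P.pairs i j α, P.pairs_sub i j α⟩

/-- The triad `G^{ijk}_{α,β,γ} = (V_i,V_j,V_k; P^α_{ij}, P^β_{ik}, P^γ_{jk})`. -/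
def Decomp.triadOf {V : Finset ℕ} {ι κ : Type} (P : Decomp V ι κ) (i j k : ι) (α β γ : κ) :
    Triad :=
  ⟨P.part i, P.part j, P.part k, P.pairs i j α, P.pairs j k γ, P.pairs i k β,
    P.pairs_sub i j α, P.pairs_sub j k γ, P.pairs_sub i k β⟩

/-- `P` is a `(t,ℓ,ε₁,ε₂)`-decomposition. -/
def Decomp.isReg {V : Finset ℕ} {ι κ : Type} (P : Decomp V ι κ) (ε₁ ε₂ : ℝ) : Prop :=
  (1 - ε₁) * (V.card : ℝ) ^ 2 ≤
    (((V ×ˢ V).filter fun p =>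
      ∃ i j α, p ∈ P.pairs i j α ∧ (P.pairBG i j α).dev2self ε₂).card : ℝ)

/-- `P` is equitable. -/
def Decomp.isEquitable {V : Finset ℕ} {ι κ : Type} [Fintype κ]
    (P : Decomp V ι κ) (ε₁ ε₂ : ℝ) : Prop :=
  (∀ i j, (P.part i).card ≤ (P.part j).card + 1) ∧
  (1 - ε₁) * (V.card : ℝ) ^ 2 ≤
    (((V ×ˢ V).filter fun p =>
      ∃ i j α, p ∈ P.pairs i j α ∧
        (P.pairBG i j α).dev2 ε₂ (1 / (Fintype.card κ : ℝ))).card : ℝ)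

/-- `P` is `dev_{2,3}(ε₁,ε₂)`-regular with respect to the triples `R`. -/
def Decomp.regWrt {V : Finset ℕ} {ι κ : Type} (P : Decomp V ι κ)
    (R : Finset (ℕ × ℕ × ℕ)) (ε₁ ε₂ : ℝ) : Prop :=
  (1 - ε₁) * (V.card : ℝ) ^ 3 ≤
    (((V ×ˢ V ×ˢ V).filter fun p =>
      ∃ i j k α β γ, p ∈ (P.triadOf i j k α β γ).K3 ∧
        dev23 R (P.triadOf i j k α β γ) ε₁ ε₂).card : ℝ)

/-- The triad `G^{ijk}_{α,β,γ}` of `P` is `μ`-non-trivial. -/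
def Decomp.nonTrivTriad {V : Finset ℕ} {t ℓ : ℕ} (P : Decomp V (Fin t) (Fin ℓ)) (μ : ℝ)
    (i j k : Fin t) (α β γ : Fin ℓ) : Prop :=
  μ * (V.card : ℝ) / (t : ℝ) ≤ ((P.part i).card : ℝ) ∧
  μ * (V.card : ℝ) / (t : ℝ) ≤ ((P.part j).card : ℝ) ∧
  μ * (V.card : ℝ) / (t : ℝ) ≤ ((P.part k).card : ℝ) ∧
  μ * ((P.part i).card : ℝ) * ((P.part j).card : ℝ) / (ℓ : ℝ) ≤ ((P.pairs i j α).card : ℝ) ∧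
  μ * ((P.part i).card : ℝ) * ((P.part k).card : ℝ) / (ℓ : ℝ) ≤ ((P.pairs i k β).card : ℝ) ∧
  μ * ((P.part j).card : ℝ) * ((P.part k).card : ℝ) / (ℓ : ℝ) ≤ ((P.pairs j k γ).card : ℝ)

/-- `H` has a `dev_{2,3}(ε₁,ε₂)`-regular `(t,ℓ,ε₁,ε₂)`-decomposition. -/
def GoodDecomp (H : ThreeGraph) (t ℓ : ℕ) (ε₁ ε₂ : ℝ) : Prop :=
  ∃ P : Decomp H.verts (Fin t) (Fin ℓ), P.isReg ε₁ ε₂ ∧ P.regWrt H.obar ε₁ ε₂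

def ThreeGraph.Iso (H₁ H₂ : ThreeGraph) : Prop :=
  ∃ f : ℕ → ℕ, Set.BijOn f ↑H₁.verts ↑H₂.verts ∧
    ∀ x ∈ H₁.verts, ∀ y ∈ H₁.verts, ∀ z ∈ H₁.verts,
      (({x, y, z} : Finset ℕ) ∈ H₁.edges ↔ ({f x, f y, f z} : Finset ℕ) ∈ H₂.edges)

def ThreeGraph.induce (H : ThreeGraph) (W : Finset ℕ) : ThreeGraph where
  verts := H.verts ∩ W
  edges := H.edges.filter fun e => e ⊆ W
  edges_sub := by
    intro e he
    rw [Finset.mem_filter] at he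
    obtain ⟨hsub, hcard⟩ := H.edges_sub e he.1
    exact ⟨fun x hx => Finset.mem_inter.mpr ⟨hsub hx, he.2 hx⟩, hcard⟩

/-- A hereditary property of 3-graphs. -/
def Hereditary (ℋ : Set ThreeGraph) : Prop :=
  (∀ H₁ H₂ : ThreeGraph, ThreeGraph.Iso H₁ H₂ → H₁ ∈ ℋ → H₂ ∈ ℋ) ∧
  (∀ H ∈ ℋ, ∀ W : Finset ℕ, H.induce W ∈ ℋ)

/-- The statement `ψ(ε₁,ε₂,T,L,ℋ)`. -/
def psi (ε₁ : ℝ) (ε₂ : ℕ → ℝ) (T L : ℕ) (ℋ : Set ThreeGraph) : Prop :=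
  ∃ n₀ : ℕ, ∀ H ∈ ℋ, n₀ ≤ H.verts.card →
    ∃ t ℓ : ℕ, 1 ≤ t ∧ t ≤ T ∧ 1 ≤ ℓ ∧ ℓ ≤ L ∧ GoodDecomp H t ℓ ε₁ (ε₂ ℓ)

/-- `L_ℋ(ε₁,ε₂)`: minimal `L` such that `ψ(ε₁,ε₂,T,L,ℋ)` holds for some `T ≥ 1`. -/
noncomputable def Lfun (ℋ : Set ThreeGraph) (ε₁ : ℝ) (ε₂ : ℕ → ℝ) : ℕ :=
  sInf {L : ℕ | ∃ T : ℕ, 1 ≤ T ∧ psi ε₁ ε₂ T L ℋ}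

def InZeroOne (f : ℕ → ℝ) : Prop := ∀ x, 0 < f x ∧ f x ≤ 1

/-- "For all sufficiently small `ε₁ > 0` and all `ε₂` tending to `0` sufficiently fast, `Φ`". -/
def SmallEps (Φ : ℝ → (ℕ → ℝ) → Prop) : Prop :=
  ∃ e₁ : ℝ, 0 < e₁ ∧ ∀ ε₁ : ℝ, 0 < ε₁ → ε₁ < e₁ →
    ∃ δ : ℕ → ℝ, InZeroOne δ ∧
      ∀ ε₂ : ℕ → ℝ, InZeroOne ε₂ → (∀ x, ε₂ x ≤ δ x) → Φ ε₁ ε₂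

/-- The `VC₂`-dimension of `H` is at least `k`. -/
def ThreeGraph.VC2AtLeast (H : ThreeGraph) (k : ℕ) : Prop :=
  ∃ a b : Fin k → ℕ, ∃ c : Finset (Fin k × Fin k) → ℕ,
    (∀ i, a i ∈ H.verts) ∧ (∀ i, b i ∈ H.verts) ∧ (∀ S, c S ∈ H.verts) ∧
    ∀ (i j : Fin k) (S : Finset (Fin k × Fin k)),
      (({a i, b j, c S} : Finset ℕ) ∈ H.edges ↔ (i, j) ∈ S)

/-- `K₃[A,B,C]`: the triples meeting each of `A`, `B`, `C`. -/
def K3Parts (A B C : Finset ℕ) : Finset (Finset ℕ) :=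
  (A ×ˢ B ×ˢ C).image fun p => ({p.1, p.2.1, p.2.2} : Finset ℕ)

/-- Neighborhood of `u` in the pair-set `W`, inside ambient set `V`. -/
def Nbhd (V : Finset ℕ) (W : Finset (ℕ × ℕ)) (u : ℕ) : Finset ℕ :=
  V.filter fun v => (u, v) ∈ W

/-- An edge-colored bigraph `(U,V;E₀,E₁,E₂)`. -/
structure ECBigraph where
  left : Finset ℕ
  right : Finset ℕ
  E0 : Finset (ℕ × ℕ)
  E1 : Finset (ℕ × ℕ)
  E2 : Finset (ℕ × ℕ)
  disj01 : Disjoint E0 E1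
  disj02 : Disjoint E0 E2
  disj12 : Disjoint E1 E2
  cover : E0 ∪ E1 ∪ E2 = left ×ˢ right

/-- `G` contains an `E₀/E₁`-copy of `U_bg(k)`. -/
def ECBigraph.CopyUbg (G : ECBigraph) (k : ℕ) : Prop :=
  ∃ u : Finset (Fin k) → ℕ, ∃ v : Fin k → ℕ,
    (∀ S, u S ∈ G.left) ∧ (∀ i, v i ∈ G.right) ∧
    ∀ (S : Finset (Fin k)) (i : Fin k),
      (i ∈ S → (u S, v i) ∈ G.E1) ∧ (i ∉ S → (u S, v i) ∈ G.E0)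

/-- `G` contains an `E₀/E₁`-copy of the bigraph `R`. -/
def ECBigraph.Copy01 (G : ECBigraph) (R : Bigraph) : Prop :=
  ∃ u v : ℕ → ℕ,
    (∀ a ∈ R.left, u a ∈ G.left) ∧ (∀ b ∈ R.right, v b ∈ G.right) ∧
    ∀ a ∈ R.left, ∀ b ∈ R.right,
      ((a, b) ∈ R.edges → (u a, v b) ∈ G.E1) ∧ ((a, b) ∉ R.edges → (u a, v b) ∈ G.E0)

/-- `K₂[A,B]`: the crossing (unordered) pairs. -/
def pairsAB (A B : Finset ℕ) : Finset (Finset ℕ) :=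
  (A ×ˢ B).image fun p => ({p.1, p.2} : Finset ℕ)

/-- A bipartite `U`-colored graph `Γ = (A ∪ B, (P_u)_{u ∈ U})`. -/
structure BipColored (U : Finset ℕ) where
  A : Finset ℕ
  B : Finset ℕ
  disjAB : Disjoint A B
  P : ℕ → Finset (Finset ℕ)
  P_disj : ∀ u ∈ U, ∀ u' ∈ U, u ≠ u' → Disjoint (P u) (P u')
  P_cover : U.biUnion P = pairsAB A B

/-- The bipartite graph `(A ∪ B, P_u)` of a color, as a bigraph (ordered pairs `P̄_u`). -/
def BipColored.colorBG {U : Finset ℕ} (Γ : BipColored U) (u : ℕ) : Bigraph where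
  left := Γ.A
  right := Γ.B
  edges := (Γ.A ×ˢ Γ.B).filter fun p => ({p.1, p.2} : Finset ℕ) ∈ Γ.P u
  edges_sub := Finset.filter_subset _ _

/-- `H` is an `(n,Γ)`-blowup of `G` with the explicit family `Cfam` of new vertex classes. -/
def IsBlowupWith (G : Bigraph) (n : ℕ) (Γ : BipColored G.left) (Cfam : ℕ → Finset ℕ)
    (H : ThreeGraph) : Prop :=
  (∀ v ∈ G.right, (Cfam v).card = n) ∧
  (∀ v ∈ G.right, ∀ v' ∈ G.right, v ≠ v' → Disjoint (Cfam v) (Cfam v')) ∧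
  (∀ v ∈ G.right, Disjoint (Cfam v) (Γ.A ∪ Γ.B)) ∧
  H.verts = Γ.A ∪ Γ.B ∪ G.right.biUnion Cfam ∧
  ∀ u ∈ G.left, ∀ v ∈ G.right, ∀ e ∈ Γ.P u, ∀ z ∈ Cfam v,
    (((u, v) ∈ G.edges → insert z e ∈ H.edges) ∧ ((u, v) ∉ G.edges → insert z e ∉ H.edges))

def IsBlowup (G : Bigraph) (n : ℕ) (Γ : BipColored G.left) (H : ThreeGraph) : Prop :=
  ∃ Cfam : ℕ → Finset ℕ, IsBlowupWith G n Γ Cfam H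

def ThreeGraph.ContainsInduced (H H' : ThreeGraph) : Prop :=
  ∃ W : Finset ℕ, ThreeGraph.Iso (H.induce W) H'

/-- The `G`-dimension of `H` is at least `n`. -/
def GDimAtLeast (G : Bigraph) (H : ThreeGraph) (n : ℕ) : Prop :=
  ∀ Γ : BipColored G.left, Γ.A.card = n → Γ.B.card = n →
    ∃ H' : ThreeGraph, IsBlowup G n Γ H' ∧ H.ContainsInduced H'

/-- `G ∈ B_ℋ`: `G` is irreducible and `ℋ` has infinite `G`-dimension. -/
def InBH (ℋ : Set ThreeGraph) (G : Bigraph) : Prop :=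
  G.Irreducible ∧ ∀ m : ℕ, ∃ H ∈ ℋ, GDimAtLeast G H m

/-- An encoding of the bigraph `R` in `(H,P)`, where `Rtrip = Ē(H)`. -/
def Encoding {V : Finset ℕ} {t ℓ : ℕ} (R : Bigraph) (Rtrip : Finset (ℕ × ℕ × ℕ))
    (P : Decomp V (Fin t) (Fin ℓ)) (ε₂ : ℝ) : Prop :=
  ∃ j₀ k₀ : Fin t, j₀ ≠ k₀ ∧
    ∃ f : ℕ → Fin ℓ, ∃ g : ℕ → Fin t × Fin ℓ × Fin ℓ,
      (∀ u ∈ R.left, (P.pairBG j₀ k₀ (f u)).dev2 ε₂ (1 / (ℓ : ℝ))) ∧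
      (∀ v ∈ R.right,
        (P.pairBG (g v).1 j₀ (g v).2.1).dev2 ε₂ (1 / (ℓ : ℝ)) ∧
        (P.pairBG (g v).1 k₀ (g v).2.2).dev2 ε₂ (1 / (ℓ : ℝ))) ∧
      ∀ u ∈ R.left, ∀ v ∈ R.right,
        (((u, v) ∈ R.edges →
          ((P.triadOf (g v).1 j₀ k₀ (g v).2.1 (g v).2.2 (f u)).K3.card : ℝ) / 2 ≤
            ((Rtrip ∩ (P.triadOf (g v).1 j₀ k₀ (g v).2.1 (g v).2.2 (f u)).K3).card : ℝ)) ∧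
         ((u, v) ∉ R.edges →
          ((Rtrip ∩ (P.triadOf (g v).1 j₀ k₀ (g v).2.1 (g v).2.2 (f u)).K3).card : ℝ) <
            ((P.triadOf (g v).1 j₀ k₀ (g v).2.1 (g v).2.2 (f u)).K3.card : ℝ) / 2))

def encodeSet (S : Finset ℕ) : ℕ := ∑ i ∈ S, 2 ^ i

/-- The bigraph `U_bg(k)` realized on `ℕ`, with subsets of `[k]` encoded in binary. -/
def Ubg (k : ℕ) : Bigraph where
  left := ((Finset.range k).powerset).image encodeSet
  right := Finset.range k
  edges := ((Finset.range k).powerset).biUnion fun S => S.image fun i => (encodeSet S, i)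
  edges_sub := by
    intro p hp
    simp only [Finset.mem_biUnion, Finset.mem_image, Finset.mem_powerset] at hp
    obtain ⟨S, hS, i, hi, rfl⟩ := hp
    refine Finset.mem_product.mpr ⟨?_, ?_⟩
    · exact Finset.mem_image.mpr ⟨S, Finset.mem_powerset.mpr hS, rfl⟩
    · exact hS hi

/-!
Take `N` with `A ∪ B ∪ C ⊆ [0, N)` and a member `H ∈ ℋ` with a `VC₂`-witness `a, b, c` of size
`N + 1`. Send `x ∈ A` to the row vertex `a x`, `y ∈ B` to the column vertex `b y`, and `z ∈ C` to
the pattern vertex `c S_z`, where `S_z` records the link `{(x, y) : {x, y, z} ∈ E}` plus a few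
marker entries that make the map injective. Pulling `H` back along this embedding gives, by
heredity and closure under isomorphism, a member of `ℋ` on `A ∪ B ∪ C` whose trace on
`K₃[A, B, C]` is exactly `E`.
-/

namespace ThreeGraph

lemma ne_of_mem_edges {H : ThreeGraph} {x y z : ℕ} (h : ({x, y, z} : Finset ℕ) ∈ H.edges) :
    x ≠ y ∧ x ≠ z ∧ y ≠ z := by
  have h3 := (H.edges_sub _ h).2
  refine ⟨?_, ?_, ?_⟩ <;> rintro rfl <;>
    simp only [Finset.insert_eq_of_mem, Finset.mem_insert, Finset.mem_singleton, or_true,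
      true_or] at h3 <;>
    exact absurd (h3 ▸ Finset.card_le_two) (by norm_num)

def comap (H : ThreeGraph) (V : Finset ℕ) (φ : ℕ → ℕ) (hφ : Set.InjOn φ V) : ThreeGraph where
  verts := V
  edges := V.powerset.filter fun e => e.image φ ∈ H.edges
  edges_sub e he := by
    rw [Finset.mem_filter, Finset.mem_powerset] at he
    refine ⟨he.1, ?_⟩
    rw [← Finset.card_image_of_injOn (hφ.mono (Finset.coe_subset.mpr he.1))]
    exact (H.edges_sub _ he.2).2

variable {H : ThreeGraph} {V : Finset ℕ} {φ : ℕ → ℕ} {hφ : Set.InjOn φ V}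

lemma mem_comap_edges {e : Finset ℕ} :
    e ∈ (H.comap V φ hφ).edges ↔ e ⊆ V ∧ e.image φ ∈ H.edges := by
  simp only [comap, Finset.mem_filter, Finset.mem_powerset]

lemma iso_induce_image_comap (hmaps : ∀ x ∈ V, φ x ∈ H.verts) :
    Iso (H.induce (V.image φ)) (H.comap V φ hφ) := by
  have hbij : Set.BijOn φ V (V.image φ) := by
    rw [Finset.coe_image]; exact hφ.bijOn_image
  have hinv := hbij.invOn_invFunOn
  have hverts : (H.induce (V.image φ)).verts = V.image φ :=
    Finset.inter_eq_right.mpr fun y hy => by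
      obtain ⟨x, hx, rfl⟩ := Finset.mem_image.mp hy
      exact hmaps x hx
  refine ⟨Function.invFunOn φ V, ?_, ?_⟩
  · rw [hverts]; exact hbij.symm hinv.symm
  rw [hverts]
  intro x hx y hy z hz
  have hψ : ∀ w ∈ V.image φ, Function.invFunOn φ V w ∈ V ∧ φ (Function.invFunOn φ V w) = w :=
    fun w hw => ⟨(hbij.symm hinv.symm).mapsTo (Finset.mem_coe.mpr hw), hinv.2 hw⟩
  simp only [induce, Finset.mem_filter, mem_comap_edges, Finset.insert_subset_iff,
    Finset.singleton_subset_iff, Finset.image_insert, Finset.image_singleton, (hψ x hx).2,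
    (hψ y hy).2, (hψ z hz).2, hx, hy, hz, (hψ x hx).1, (hψ y hy).1, (hψ z hz).1, and_true,
    true_and]

end ThreeGraph

lemma Hereditary.comap_mem {ℋ : Set ThreeGraph} (hℋ : Hereditary ℋ) {H : ThreeGraph} (hH : H ∈ ℋ)
    {V : Finset ℕ} {φ : ℕ → ℕ} (hφ : Set.InjOn φ V) (hmaps : ∀ x ∈ V, φ x ∈ H.verts) :
    H.comap V φ hφ ∈ ℋ :=
  hℋ.1 _ _ (ThreeGraph.iso_induce_image_comap hmaps) (hℋ.2 H hH _)

def ThreeGraph.Shatters {k : ℕ} (H : ThreeGraph) (a b : Fin k → ℕ)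
    (c : Finset (Fin k × Fin k) → ℕ) : Prop :=
  ∀ i j S, ({a i, b j, c S} : Finset ℕ) ∈ H.edges ↔ (i, j) ∈ S

namespace ThreeGraph.Shatters

variable {H : ThreeGraph} {k : ℕ} {a b : Fin k → ℕ} {c : Finset (Fin k × Fin k) → ℕ}

lemma left_injective (hs : H.Shatters a b c) : Function.Injective a := by
  intro i i' h
  have hedge := (hs i i {(i, i)}).mpr (Finset.mem_singleton_self _)
  rw [h, hs] at hedge
  exact (Prod.ext_iff.mp (Finset.mem_singleton.mp hedge)).1.symm

lemma right_injective (hs : H.Shatters a b c) : Function.Injective b := by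
  intro j j' h
  have hedge := (hs j j {(j, j)}).mpr (Finset.mem_singleton_self _)
  rw [h, hs] at hedge
  exact (Prod.ext_iff.mp (Finset.mem_singleton.mp hedge)).2.symm

lemma pattern_injective (hs : H.Shatters a b c) : Function.Injective c := by
  intro S S' h
  ext ⟨i, j⟩
  rw [← hs, ← hs, h]

lemma left_ne_right (hs : H.Shatters a b c) (i j : Fin k) : a i ≠ b j :=
  (ne_of_mem_edges ((hs i j Finset.univ).mpr (Finset.mem_univ _))).1

lemma left_ne_pattern (hs : H.Shatters a b c) {i j : Fin k} {S : Finset (Fin k × Fin k)}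
    (h : (i, j) ∈ S) : a i ≠ c S :=
  (ne_of_mem_edges ((hs i j S).mpr h)).2.1

lemma right_ne_pattern (hs : H.Shatters a b c) {i j : Fin k} {S : Finset (Fin k × Fin k)}
    (h : (i, j) ∈ S) : b j ≠ c S :=
  (ne_of_mem_edges ((hs i j S).mpr h)).2.2

end ThreeGraph.Shatters

section Embedding

variable {N : ℕ} (A B C : Finset ℕ) (E : Finset (Finset ℕ))

/-- Row `N` and column `N` are full, so every `a x` and `b y` shares an edge with `c S_z` and is
therefore distinct from it; the diagonal entry `(z, z)` lies outside `A × B` and tells the patterns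
of different `z` apart. -/
def tripartitePattern (z : ℕ) : Finset (Fin (N + 1) × Fin (N + 1)) :=
  Finset.univ.filter fun p =>
    ((p.1 : ℕ) ∈ A ∧ (p.2 : ℕ) ∈ B ∧ ({(p.1 : ℕ), (p.2 : ℕ), z} : Finset ℕ) ∈ E) ∨
      (p.1 : ℕ) = N ∨ (p.2 : ℕ) = N ∨ ((p.1 : ℕ) = z ∧ (p.2 : ℕ) = z)

variable {A B E}

lemma mk_mem_tripartitePattern_iff {x y z : ℕ} (hx : x < N + 1) (hy : y < N + 1) :
    (Fin.ofNat (N + 1) x, Fin.ofNat (N + 1) y) ∈ tripartitePattern (N := N) A B E z ↔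
      (x ∈ A ∧ y ∈ B ∧ ({x, y, z} : Finset ℕ) ∈ E) ∨ x = N ∨ y = N ∨ (x = z ∧ y = z) := by
  simp only [tripartitePattern, Finset.mem_filter, Finset.mem_univ, true_and,
    Fin.val_ofNat, Nat.mod_eq_of_lt hx, Nat.mod_eq_of_lt hy]

variable (A B E) in
def tripartiteEmbedding (a b : Fin (N + 1) → ℕ) (c : Finset (Fin (N + 1) × Fin (N + 1)) → ℕ)
    (x : ℕ) : ℕ :=
  if x ∈ A then a (Fin.ofNat (N + 1) x)
  else if x ∈ B then b (Fin.ofNat (N + 1) x) else c (tripartitePattern A B E x)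

variable {H : ThreeGraph} {a b : Fin (N + 1) → ℕ} {c : Finset (Fin (N + 1) × Fin (N + 1)) → ℕ}
  {C}

lemma tripartitePattern_injOn (hAC : Disjoint A C) (hC : C ⊆ Finset.range N) :
    Set.InjOn (tripartitePattern (N := N) A B E) C := by
  intro z hz z' hz' h
  have hzN : z < N := Finset.mem_range.mp (hC hz)
  have hdiag := (mk_mem_tripartitePattern_iff (A := A) (B := B) (E := E) (z := z)
    (Nat.lt_succ_of_lt hzN) (Nat.lt_succ_of_lt hzN)).mpr (Or.inr (Or.inr (Or.inr ⟨rfl, rfl⟩)))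
  rw [h, mk_mem_tripartitePattern_iff (Nat.lt_succ_of_lt hzN) (Nat.lt_succ_of_lt hzN)] at hdiag
  rcases hdiag with ⟨hzA, -⟩ | rfl | rfl | ⟨rfl, -⟩
  · exact absurd hzA (Finset.disjoint_right.mp hAC hz)
  · omega
  · omega
  · rfl

lemma tripartiteEmbedding_of_mem_left {x : ℕ} (hx : x ∈ A) :
    tripartiteEmbedding A B E a b c x = a (Fin.ofNat (N + 1) x) :=
  if_pos hx

lemma tripartiteEmbedding_of_mem_middle (hAB : Disjoint A B) {y : ℕ} (hy : y ∈ B) :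
    tripartiteEmbedding A B E a b c y = b (Fin.ofNat (N + 1) y) := by
  rw [tripartiteEmbedding, if_neg (Finset.disjoint_right.mp hAB hy), if_pos hy]

lemma tripartiteEmbedding_of_mem_right (hAC : Disjoint A C) (hBC : Disjoint B C) {z : ℕ}
    (hz : z ∈ C) : tripartiteEmbedding A B E a b c z = c (tripartitePattern A B E z) := by
  rw [tripartiteEmbedding, if_neg (Finset.disjoint_right.mp hAC hz),
    if_neg (Finset.disjoint_right.mp hBC hz)]

lemma tripartiteEmbedding_mem_edges_iff (hs : H.Shatters a b c) (hAB : Disjoint A B)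
    (hAC : Disjoint A C) (hBC : Disjoint B C) (hN : A ∪ B ∪ C ⊆ Finset.range N)
    {x y z : ℕ} (hx : x ∈ A) (hy : y ∈ B) (hz : z ∈ C) :
    ({tripartiteEmbedding A B E a b c x, tripartiteEmbedding A B E a b c y,
        tripartiteEmbedding A B E a b c z} : Finset ℕ) ∈ H.edges ↔
      ({x, y, z} : Finset ℕ) ∈ E := by
  have hxN : x < N := Finset.mem_range.mp (hN (by simp [hx]))
  have hyN : y < N := Finset.mem_range.mp (hN (by simp [hy]))
  have hxz : x ≠ z := fun h => Finset.disjoint_left.mp hAC hx (h ▸ hz)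
  rw [tripartiteEmbedding_of_mem_left hx, tripartiteEmbedding_of_mem_middle hAB hy,
    tripartiteEmbedding_of_mem_right hAC hBC hz, hs,
    mk_mem_tripartitePattern_iff (by omega) (by omega)]
  simp only [hx, hy, hxN.ne, hyN.ne, hxz, true_and, false_and, or_false]

lemma tripartiteEmbedding_injOn (hs : H.Shatters a b c) (hAB : Disjoint A B)
    (hAC : Disjoint A C) (hBC : Disjoint B C) (hN : A ∪ B ∪ C ⊆ Finset.range N) :
    Set.InjOn (tripartiteEmbedding A B E a b c) ↑(A ∪ B ∪ C) := by
  have hlt : ∀ x ∈ A ∪ B ∪ C, x < N + 1 := fun x hx => by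
    have := Finset.mem_range.mp (hN hx); omega
  have hofNat : ∀ x ∈ A ∪ B ∪ C, ∀ y ∈ A ∪ B ∪ C,
      Fin.ofNat (N + 1) x = Fin.ofNat (N + 1) y → x = y := fun x hx y hy h => by
    simpa [Fin.ext_iff, Nat.mod_eq_of_lt (hlt x hx), Nat.mod_eq_of_lt (hlt y hy)] using h
  have hdisj : Disjoint (↑(A ∪ B) : Set ℕ) ↑C := by
    rw [Finset.disjoint_coe]; exact Finset.disjoint_union_left.mpr ⟨hAC, hBC⟩
  rw [Finset.coe_union, Set.injOn_union hdisj, Finset.coe_union,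
    Set.injOn_union (Finset.disjoint_coe.mpr hAB)]
  have hA : ∀ x ∈ A, x ∈ A ∪ B ∪ C := fun x hx => by simp [hx]
  have hB : ∀ x ∈ B, x ∈ A ∪ B ∪ C := fun x hx => by simp [hx]
  refine ⟨⟨fun x hx x' hx' h => ?_, fun y hy y' hy' h => ?_, fun x hx y hy => ?_⟩,
    fun z hz z' hz' h => ?_, fun x hx z hz => ?_⟩
  · rw [tripartiteEmbedding_of_mem_left hx, tripartiteEmbedding_of_mem_left hx'] at h
    exact hofNat x (hA x hx) x' (hA x' hx') (hs.left_injective h)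
  · rw [tripartiteEmbedding_of_mem_middle hAB hy, tripartiteEmbedding_of_mem_middle hAB hy'] at h
    exact hofNat y (hB y hy) y' (hB y' hy') (hs.right_injective h)
  · rw [tripartiteEmbedding_of_mem_left hx, tripartiteEmbedding_of_mem_middle hAB hy]
    exact hs.left_ne_right _ _
  · rw [tripartiteEmbedding_of_mem_right hAC hBC hz, tripartiteEmbedding_of_mem_right hAC hBC hz']
      at h
    exact tripartitePattern_injOn hAC (Finset.subset_union_right.trans hN) hz hz'
      (hs.pattern_injective h)
  · rw [tripartiteEmbedding_of_mem_right hAC hBC hz]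
    rcases hx with hxA | hxB
    · rw [tripartiteEmbedding_of_mem_left hxA]
      exact hs.left_ne_pattern ((mk_mem_tripartitePattern_iff (hlt x (hA x hxA))
        N.lt_succ_self).mpr (Or.inr (Or.inr (Or.inl rfl))))
    · rw [tripartiteEmbedding_of_mem_middle hAB hxB]
      exact hs.right_ne_pattern ((mk_mem_tripartitePattern_iff N.lt_succ_self
        (hlt x (hB x hxB))).mpr (Or.inr (Or.inl rfl)))

end Embedding

lemma ThreeGraph.comap_edges_inter_K3Parts {H : ThreeGraph} {A B C : Finset ℕ}
    {E : Finset (Finset ℕ)} {φ : ℕ → ℕ} (hφ : Set.InjOn φ ↑(A ∪ B ∪ C))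
    (hφE : ∀ x ∈ A, ∀ y ∈ B, ∀ z ∈ C,
      (({φ x, φ y, φ z} : Finset ℕ) ∈ H.edges ↔ ({x, y, z} : Finset ℕ) ∈ E))
    (hE : E ⊆ K3Parts A B C) :
    (H.comap (A ∪ B ∪ C) φ hφ).edges ∩ K3Parts A B C = E := by
  ext e
  rw [Finset.mem_inter]
  by_cases heK : e ∈ K3Parts A B C
  · obtain ⟨⟨x, y, z⟩, hxyz, rfl⟩ := Finset.mem_image.mp heK
    simp only [Finset.mem_product] at hxyz
    obtain ⟨hx, hy, hz⟩ := hxyz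
    have hsub : ({x, y, z} : Finset ℕ) ⊆ A ∪ B ∪ C := by
      simp only [Finset.insert_subset_iff, Finset.singleton_subset_iff, Finset.mem_union]
      exact ⟨Or.inl (Or.inl hx), Or.inl (Or.inr hy), Or.inr hz⟩
    simp only [heK, and_true, ThreeGraph.mem_comap_edges, hsub, true_and, Finset.image_insert,
      Finset.image_singleton]
    exact hφE x hx y hy z hz
  · exact iff_of_false (fun h => heK h.2) (fun h => heK (hE h))

/-- Properties of infinite `VC₂`-dimension contain all tripartite patterns. -/
theorem stmt_6 (ℋ : Set ThreeGraph) (hH : Hereditary ℋ)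
    (hVC : ∀ k : ℕ, ∃ H ∈ ℋ, H.VC2AtLeast k)
    (A B C : Finset ℕ) (hAB : Disjoint A B) (hAC : Disjoint A C) (hBC : Disjoint B C)
    (E : Finset (Finset ℕ)) (hE : E ⊆ K3Parts A B C) :
    ∃ H' ∈ ℋ, H'.verts = A ∪ B ∪ C ∧ H'.edges ∩ K3Parts A B C = E := by
  obtain ⟨N, hN⟩ := (A ∪ B ∪ C).exists_nat_subset_range
  obtain ⟨H, hHℋ, a, b, c, ha, hb, hc, hs⟩ := hVC (N + 1)
  have hs : H.Shatters a b c := hs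
  set φ := tripartiteEmbedding A B E a b c
  have hφ : Set.InjOn φ ↑(A ∪ B ∪ C) := tripartiteEmbedding_injOn hs hAB hAC hBC hN
  have hmaps : ∀ x ∈ A ∪ B ∪ C, φ x ∈ H.verts := fun x _ => by
    simp only [φ, tripartiteEmbedding]; split_ifs <;> simp only [ha, hb, hc]
  exact ⟨H.comap (A ∪ B ∪ C) φ hφ, hH.comap_mem hHℋ hφ hmaps, rfl,
    ThreeGraph.comap_edges_inter_K3Parts hφ
      (fun _ hx _ hy _ hz => tripartiteEmbedding_mem_edges_iff hs hAB hAC hBC hN hx hy hz) hE⟩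
end

section
/- For all k≥1 there is N such that the following holds: every irreducible bigraph G=(U,V;E) with min{|U|,|V|}≥N contains an induced copy of H(k), M(k), or M̄(k). -/
open scoped Classical
open Finset

set_option maxHeartbeats 1000000

/-!
Irreducibility makes any two vertices of `U` differ at some vertex of `V`. Splitting a set of
`2 ^ m` vertices of `U` along such a separating vertex `v₁`, keeping the larger half and one vertex
`u₁` of the other half, and recursing, gives rows `u₁, …, u_m` and columns `v₁, …, v_m` such that
every later row `u_j` disagrees with `u_i` at `v_i`: below the diagonal, adjacency is the negation
of the diagonal entry of the column. A second halving argument passes to a subsequence on which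
adjacency above the diagonal depends only on the row, and pigeonhole on the two resulting bits
leaves a pattern that is constant above the diagonal, constant on it, and the opposite constant
below it. Its four possible shapes are `H(k)`, `M(k)`, `M̄(k)` and a reversed `H(k)`.
-/

theorem Finset.two_pow_le_card_filter_or_filter_not {α : Type*} (A : Finset α) (P : α → Prop)
    [DecidablePred P] {m : ℕ} (h : 2 ^ (m + 1) ≤ A.card + 1) :
    2 ^ m ≤ (A.filter P).card ∨ 2 ^ m ≤ (A.filter fun a => ¬ P a).card := by
  have := A.card_filter_add_card_filter_not P
  rw [pow_succ] at h
  omega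

theorem exists_separating_sequence {α β : Type*} (r : α → β → Prop) (W : Set β) (m : ℕ)
    (A : Finset α) (hA : ∀ a ∈ A, ∀ a' ∈ A, a ≠ a' → ∃ w ∈ W, ¬(r a w ↔ r a' w))
    (hcard : 2 ^ m ≤ A.card) :
    ∃ (u : Fin m → α) (v : Fin m → β), (∀ i, u i ∈ A) ∧ (∀ i, v i ∈ W) ∧
      ∀ i j, i < j → (r (u j) (v i) ↔ ¬ r (u i) (v i)) := by
  induction m generalizing A with
  | zero => exact ⟨Fin.elim0, Fin.elim0, Fin.rec0, Fin.rec0, Fin.rec0⟩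
  | succ m ih =>
    obtain ⟨a, ha, a', ha', hne⟩ := Finset.one_lt_card.mp
      (lt_of_lt_of_le (Nat.one_lt_two_pow (Nat.succ_ne_zero m)) hcard)
    obtain ⟨w, hwW, hw⟩ := hA a ha a' ha' hne
    obtain ⟨B, hBA, hB, u₀, hu₀, hBu₀⟩ : ∃ B ⊆ A, 2 ^ m ≤ B.card ∧
        ∃ u₀ ∈ A, ∀ y ∈ B, (r y w ↔ ¬ r u₀ w) := by
      rcases A.two_pow_le_card_filter_or_filter_not (fun y => r y w ↔ r a w) (m := m) (by omega)
        with hB | hB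
      · exact ⟨_, filter_subset _ _, hB, a', ha', fun y hy => by
          have := (mem_filter.mp hy).2; tauto⟩
      · exact ⟨_, filter_subset _ _, hB, a, ha, fun y hy => by
          have := (mem_filter.mp hy).2; tauto⟩
    obtain ⟨u, v, hu, hv, huv⟩ :=
      ih B (fun y hy y' hy' => hA y (hBA hy) y' (hBA hy')) hB
    refine ⟨Fin.cons u₀ u, Fin.cons w v, Fin.cases hu₀ fun i => hBA (hu i),
      Fin.cases hwW hv, fun i j hij => ?_⟩
    induction j using Fin.cases with
    | zero => exact absurd hij (Fin.not_lt_zero i)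
    | succ j =>
      induction i using Fin.cases with
      | zero => simpa using hBu₀ _ (hu j)
      | succ i => simpa using huv i j (Fin.succ_lt_succ_iff.mp hij)

theorem exists_strictMono_rel_determined_by_left {α : Type*} [LinearOrder α]
    (R : α → α → Prop) (r : ℕ) (A : Finset α) (hcard : 2 ^ r ≤ A.card) :
    ∃ x : Fin r → α, StrictMono x ∧ (∀ i, x i ∈ A) ∧
      ∃ p : Fin r → Prop, ∀ i j, i < j → (R (x i) (x j) ↔ p i) := by
  induction r generalizing A with
  | zero => exact ⟨Fin.elim0, fun i => Fin.elim0 i, Fin.rec0, Fin.elim0, Fin.rec0⟩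
  | succ r ih =>
    have hA : A.Nonempty := card_pos.mp (lt_of_lt_of_le (Nat.two_pow_pos _) hcard)
    set a := A.min' hA
    have herase : (A.erase a).card + 1 = A.card := card_erase_add_one (A.min'_mem hA)
    obtain ⟨B, hBA, hB, q, hBq⟩ : ∃ B ⊆ A.erase a, 2 ^ r ≤ B.card ∧
        ∃ q : Prop, ∀ y ∈ B, (R a y ↔ q) := by
      rcases (A.erase a).two_pow_le_card_filter_or_filter_not (R a) (m := r) (by omega)
        with hB | hB
      · exact ⟨_, filter_subset _ _, hB, True, fun y hy => by simpa using (mem_filter.mp hy).2⟩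
      · exact ⟨_, filter_subset _ _, hB, False, fun y hy => by simpa using (mem_filter.mp hy).2⟩
    obtain ⟨x, hx, hxB, p, hp⟩ := ih B hB
    have ha_lt : ∀ i, a < x i := fun i =>
      lt_of_le_of_ne (A.min'_le _ (mem_of_mem_erase (hBA (hxB i))))
        (ne_of_mem_erase (hBA (hxB i))).symm
    refine ⟨Fin.cons a x, Fin.strictMono_cons.mpr ⟨ha_lt, hx⟩,
      Fin.cases (A.min'_mem hA) fun i => mem_of_mem_erase (hBA (hxB i)), Fin.cons q p,
      fun i j hij => ?_⟩
    induction j using Fin.cases with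
    | zero => exact absurd hij (Fin.not_lt_zero i)
    | succ j =>
      induction i using Fin.cases with
      | zero => simpa using hBq _ (hxB j)
      | succ i => simpa using hp i j (Fin.succ_lt_succ_iff.mp hij)

theorem Fin.exists_orderEmbedding_const_of_card_mul_le {κ : Type*} [Fintype κ] [Nonempty κ]
    {n k : ℕ} (f : Fin n → κ) (h : Fintype.card κ * k ≤ n) :
    ∃ (e : Fin k ↪o Fin n) (y : κ), ∀ i, f (e i) = y := by
  obtain ⟨y, hy⟩ := Fintype.exists_le_card_fiber_of_mul_le_card f (by simpa using h)
  obtain ⟨S, hS, hcard⟩ := exists_subset_card_eq hy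
  exact ⟨S.orderEmbOfFin hcard, y, fun i => (mem_filter.mp (hS (S.orderEmbOfFin_mem hcard i))).2⟩

theorem Bigraph.HasInducedPattern.reindex {G : Bigraph} {n k : ℕ} {F : Fin n → Fin n → Prop}
    {F' : Fin k → Fin k → Prop} (h : G.HasInducedPattern n F) (ρ σ : Fin k → Fin n)
    (hF : ∀ a b, F (ρ a) (σ b) ↔ F' a b) : G.HasInducedPattern k F' := by
  obtain ⟨u, v, hu, hv, huv⟩ := h
  exact ⟨u ∘ ρ, v ∘ σ, fun a => hu _, fun b => hv _, fun a b => (huv _ _).trans (hF a b)⟩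

theorem Bigraph.hasInducedPattern_of_trichotomous {G : Bigraph} {k : ℕ} {p q : Prop}
    (h : G.HasInducedPattern (k + 1) fun a b => a < b ∧ p ∨ a = b ∧ q ∨ b < a ∧ ¬ q) :
    (G.HasInducedPattern k fun a b => a ≤ b) ∨
      (G.HasInducedPattern k fun a b => a = b) ∨
      (G.HasInducedPattern k fun a b => a ≠ b) := by
  by_cases hq : q <;> by_cases hp : p
  · exact Or.inl <| h.reindex Fin.castSucc Fin.castSucc fun a b => by
      simp [hp, hq, le_iff_lt_or_eq]
  · exact Or.inr <| Or.inl <| h.reindex Fin.castSucc Fin.castSucc fun a b => by simp [hp, hq]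
  · exact Or.inr <| Or.inr <| h.reindex Fin.castSucc Fin.castSucc fun a b => by simp [hp, hq]
  -- Adjacency exactly below the diagonal: reversing both orders and shifting the rows by one
  -- turns it into `H(k)`.
  · exact Or.inl <| h.reindex (fun a => a.rev.succ) (fun b => b.rev.castSucc) fun a b => by
      simp [hp, hq]

theorem Bigraph.Irreducible.exists_separating_right {G : Bigraph} (hG : G.Irreducible)
    {a a' : ℕ} (ha : a ∈ G.left) (ha' : a' ∈ G.left) (hne : a ≠ a') :
    ∃ w ∈ G.right, ¬((a, w) ∈ G.edges ↔ (a', w) ∈ G.edges) := by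
  obtain ⟨w, hw⟩ : ∃ w, ¬((a, w) ∈ G.edges ↔ (a', w) ∈ G.edges) := by
    by_contra! h
    exact hne (hG.1 a ha a' ha' h)
  have hedge : (a, w) ∈ G.edges ∨ (a', w) ∈ G.edges := by tauto
  refine ⟨w, ?_, hw⟩
  rcases hedge with h | h <;> exact (mem_product.mp (G.edges_sub h)).2

theorem Bigraph.exists_trichotomous_pattern (G : Bigraph) (hG : G.Irreducible) (n : ℕ)
    (hcard : 2 ^ 2 ^ (4 * n) ≤ G.left.card) :
    ∃ p q : Prop, G.HasInducedPattern n fun a b => a < b ∧ p ∨ a = b ∧ q ∨ b < a ∧ ¬ q := by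
  obtain ⟨u, v, hu, hv, huv⟩ := exists_separating_sequence (fun a w => (a, w) ∈ G.edges)
    G.right _ G.left (fun a ha a' ha' => hG.exists_separating_right ha ha') hcard
  obtain ⟨x, hx, -, p, hp⟩ := exists_strictMono_rel_determined_by_left
    (fun i j => (u i, v j) ∈ G.edges) (4 * n) univ (by simp)
  obtain ⟨e, ⟨p₀, q₀⟩, he⟩ := Fin.exists_orderEmbedding_const_of_card_mul_le (k := n)
    (fun i => (p i, (u (x i), v (x i)) ∈ G.edges)) (by simp [Fintype.card_prop])
  simp only [Prod.mk.injEq] at he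
  have hs : StrictMono (x ∘ e) := hx.comp e.strictMono
  refine ⟨p₀, q₀, u ∘ x ∘ e, v ∘ x ∘ e, fun _ => hu _, fun _ => hv _, fun a b => ?_⟩
  rcases lt_trichotomy a b with hab | rfl | hab
  · simpa [hab, hab.ne, hab.not_gt, (he a).1] using hp _ _ (e.strictMono hab)
  · simpa using (he a).2
  · simpa [hab, hab.ne', hab.not_gt, (he b).2] using huv _ _ (hs hab)

theorem stmt_7_general (k : ℕ) :
    ∃ N : ℕ, ∀ G : Bigraph, G.Irreducible →
      N ≤ G.left.card → N ≤ G.right.card →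
      (G.HasInducedPattern k fun a b => a ≤ b) ∨
      (G.HasInducedPattern k fun a b => a = b) ∨
      (G.HasInducedPattern k fun a b => a ≠ b) := by
  refine ⟨2 ^ 2 ^ (4 * (k + 1)), fun G hG hU _ => ?_⟩
  obtain ⟨p, q, h⟩ := G.exists_trichotomous_pattern hG (k + 1) hU
  exact Bigraph.hasInducedPattern_of_trichotomous h

/-- Large irreducible bigraphs contain `H(k)`, `M(k)`, or `M̄(k)`. -/
theorem stmt_7 (k : ℕ) (hk : 1 ≤ k) :
    ∃ N : ℕ, ∀ G : Bigraph, G.Irreducible →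
      N ≤ G.left.card → N ≤ G.right.card →
      (G.HasInducedPattern k fun a b => a ≤ b) ∨
      (G.HasInducedPattern k fun a b => a = b) ∨
      (G.HasInducedPattern k fun a b => a ≠ b) :=
  stmt_7_general k
end

section
/- For every C≥1 and δ>0 there is ε*>0 such that for all 0<ε<ε* the following holds. Assume G=(U,V;E₀,E₁,E₂) is an edge-colored bigraph such that |E₂| ≤ ε|U||V| and, for every irreducible bigraph R∈Irr(C), G contains no E₀/E₁-copy of R. Then there is an integer m<C, vertices x₁,…,x_m∈U, and a set U₀⊆U with |U₀| ≤ √ε·|U|, such that for all u∈U∖U₀: |N_{E₂}(u)| ≤ √ε·|V|, and there is some 1≤i≤m with max{|N_{E₁}(u) Δ N_{E₁}(x_i)|, |N_{E₀}(u) Δ N_{E₀}(x_i)|} ≤ δ|V|. -/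
open scoped Classical
open Finset

set_option maxHeartbeats 1000000

/-!
Discard the set `U₀` of vertices with more than `√ε |V|` neighbours in `E₂`; by Markov's
inequality `|U₀| ≤ √ε |U|`. Among the remaining vertices take a maximal family of pairwise
`δ`-far vertices, so that every remaining vertex is `δ`-close to a member of it. If the family
had `C` members, the at most `C √ε |V| ≤ δ |V|` columns meeting an `E₂`-edge from it could not
cover any of the symmetric differences witnessing farness, so every two members are separated
in `E₁` by a column carrying only `E₀`/`E₁`-edges to the family. A minimal set of such separating
columns has pairwise distinct traces on the family and spans an `E₀/E₁`-copy of an irreducible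
bigraph with `C` left vertices, which is forbidden.
-/

open scoped symmDiff

theorem mem_symmDiff_Nbhd {V : Finset ℕ} {E : Finset (ℕ × ℕ)} {a b v : ℕ} :
    v ∈ Nbhd V E a ∆ Nbhd V E b ↔ v ∈ V ∧ ¬((a, v) ∈ E ↔ (b, v) ∈ E) := by
  simp only [Finset.mem_symmDiff, Nbhd, Finset.mem_filter]
  tauto

theorem sum_card_Nbhd_le (X V : Finset ℕ) (E : Finset (ℕ × ℕ)) :
    ∑ u ∈ X, (Nbhd V E u).card ≤ E.card :=
  calc ∑ u ∈ X, (Nbhd V E u).card = ((X ×ˢ V).filter (· ∈ E)).card := by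
        simp only [Nbhd, Finset.card_filter, Finset.sum_product]
    _ ≤ E.card := Finset.card_le_card fun p hp => (Finset.mem_filter.mp hp).2

theorem card_filter_lt_card_Nbhd_le {U V : Finset ℕ} {E : Finset (ℕ × ℕ)} {t : ℝ} (ht : 0 < t)
    (hE : (E.card : ℝ) ≤ t ^ 2 * U.card * V.card) :
    ((U.filter fun u => t * V.card < (Nbhd V E u).card).card : ℝ) ≤ t * U.card := by
  set X := U.filter fun u => t * V.card < (Nbhd V E u).card
  rcases (V.card).eq_zero_or_pos with hV | hV
  · have hX : X = ∅ := Finset.filter_false_of_mem fun u _ => by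
      rw [Finset.card_eq_zero.mp hV]
      simp [Nbhd]
    simp only [hX, Finset.card_empty, Nat.cast_zero]
    positivity
  have hXU : (X.card : ℝ) * (t * V.card) ≤ t * U.card * (t * V.card) :=
    calc (X.card : ℝ) * (t * V.card) ≤ ∑ u ∈ X, ((Nbhd V E u).card : ℝ) := by
          rw [← nsmul_eq_mul, ← Finset.sum_const]
          exact Finset.sum_le_sum fun u hu => (Finset.mem_filter.mp hu).2.le
      _ ≤ E.card := by exact_mod_cast sum_card_Nbhd_le X V E
      _ ≤ t * U.card * (t * V.card) := by linarith
  exact le_of_mul_le_mul_right hXU (by positivity)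

theorem Finset.exists_maximal_pairwise {α : Type*} (A : Finset α) {r : α → α → Prop}
    (hsymm : ∀ a b, r a b → r b a) (hirr : ∀ a, ¬ r a a) :
    ∃ M ⊆ A, (M : Set α).Pairwise r ∧ ∀ a ∈ A, ∃ b ∈ M, ¬ r a b := by
  set pairwiseSets := A.powerset.filter fun M : Finset α => (M : Set α).Pairwise r
  obtain ⟨M, hM, hmax⟩ := pairwiseSets.exists_max_image Finset.card ⟨∅, by simp [pairwiseSets]⟩
  rw [Finset.mem_filter, Finset.mem_powerset] at hM
  refine ⟨M, hM.1, hM.2, fun a ha => ?_⟩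
  by_cases haM : a ∈ M
  · exact ⟨a, haM, hirr a⟩
  by_contra! hfar
  have hins : insert a M ∈ pairwiseSets := by
    rw [Finset.mem_filter, Finset.mem_powerset, Finset.coe_insert, Set.pairwise_insert]
    exact ⟨Finset.insert_subset ha hM.1, hM.2, fun b hb _ => ⟨hfar b hb, hsymm _ _ (hfar b hb)⟩⟩
  have := hmax _ hins
  rw [Finset.card_insert_of_notMem haM] at this
  omega

namespace ECBigraph

variable (G : ECBigraph)

theorem mem_E0_iff_notMem_E1 {u v : ℕ} (hu : u ∈ G.left) (hv : v ∈ G.right)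
    (h2 : (u, v) ∉ G.E2) : (u, v) ∈ G.E0 ↔ (u, v) ∉ G.E1 := by
  have hcell : (u, v) ∈ G.E0 ∪ G.E1 ∪ G.E2 := G.cover ▸ Finset.mem_product.mpr ⟨hu, hv⟩
  simp only [Finset.mem_union, h2, or_false] at hcell
  exact ⟨fun h0 => Finset.disjoint_left.mp G.disj01 h0, hcell.resolve_right⟩

def SeparatesE1 (S T : Finset ℕ) : Prop :=
  ∀ a ∈ S, ∀ b ∈ S, a ≠ b → ∃ v ∈ T, ¬((a, v) ∈ G.E1 ↔ (b, v) ∈ G.E1)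

variable {G}

theorem SeparatesE1.erase {S T : Finset ℕ} (hsep : G.SeparatesE1 S T) {v w : ℕ} (hv : v ∈ T)
    (hvw : v ≠ w) (htrace : ∀ a ∈ S, (a, v) ∈ G.E1 ↔ (a, w) ∈ G.E1) :
    G.SeparatesE1 S (T.erase w) := by
  intro a ha b hb hab
  obtain ⟨x, hx, hsepx⟩ := hsep a ha b hb hab
  by_cases hxw : x = w
  · subst hxw
    exact ⟨v, Finset.mem_erase.mpr ⟨hvw, hv⟩, by rwa [htrace a ha, htrace b hb]⟩
  · exact ⟨x, Finset.mem_erase.mpr ⟨hxw, hx⟩, hsepx⟩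

/-- A minimal separating set of columns has pairwise distinct traces on `S`, so it spans an
irreducible bigraph. -/
theorem exists_irreducible_copy_of_separatesE1 {S T : Finset ℕ} (hS : S ⊆ G.left)
    (hT : T ⊆ G.right) (hclean : ∀ a ∈ S, ∀ v ∈ T, (a, v) ∉ G.E2) (hsep : G.SeparatesE1 S T) :
    ∃ R : Bigraph, R.Irreducible ∧ R.left = S ∧ G.Copy01 R := by
  obtain ⟨T', hT', hmin⟩ := (T.powerset.filter (G.SeparatesE1 S)).exists_min_image Finset.card
    ⟨T, Finset.mem_filter.mpr ⟨Finset.mem_powerset_self T, hsep⟩⟩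
  rw [Finset.mem_filter, Finset.mem_powerset] at hT'
  obtain ⟨hT'T, hsep'⟩ := hT'
  let R : Bigraph := ⟨S, T', (S ×ˢ T').filter (· ∈ G.E1), Finset.filter_subset _ _⟩
  have hR : ∀ {a v}, a ∈ S → v ∈ T' → ((a, v) ∈ R.edges ↔ (a, v) ∈ G.E1) := fun ha hv => by
    simp [R, ha, hv]
  refine ⟨R, ⟨fun a ha b hb hab => ?_, fun v hv w hw hvw => ?_⟩, rfl,
    id, id, hS, fun v hv => hT (hT'T hv), fun a ha v hv => ⟨(hR ha hv).mp, fun hE1 => ?_⟩⟩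
  · by_contra hne
    obtain ⟨v, hv, hsepv⟩ := hsep' a ha b hb hne
    exact hsepv (by rw [← hR ha hv, ← hR hb hv]; exact hab v)
  · by_contra hne
    have hsmaller := hmin _ (Finset.mem_filter.mpr ⟨Finset.mem_powerset.mpr
      ((Finset.erase_subset w T').trans hT'T),
      hsep'.erase hv hne fun a ha => by rw [← hR ha hv, ← hR ha hw]; exact hvw a⟩)
    have := Finset.card_erase_lt_of_mem (show w ∈ T' from hw)
    omega
  · exact (G.mem_E0_iff_notMem_E1 (hS ha) (hT (hT'T hv)) (hclean a ha v (hT'T hv))).mpr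
      (fun h => hE1 ((hR ha hv).mpr h))

variable (G) in
def Far (δ : ℝ) (a b : ℕ) : Prop :=
  δ * G.right.card < ((Nbhd G.right G.E1 a ∆ Nbhd G.right G.E1 b).card : ℝ) ∨
    δ * G.right.card < ((Nbhd G.right G.E0 a ∆ Nbhd G.right G.E0 b).card : ℝ)

theorem Far.symm {δ : ℝ} {a b : ℕ} (h : G.Far δ a b) : G.Far δ b a := by
  rwa [Far, symmDiff_comm, symmDiff_comm (Nbhd G.right G.E0 a)] at h

variable (G) in
theorem not_far_self {δ : ℝ} (hδ : 0 ≤ δ) (a : ℕ) : ¬ G.Far δ a a := by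
  simp only [Far, symmDiff_self, Finset.bot_eq_empty, Finset.card_empty, Nat.cast_zero, or_self,
    not_lt]
  positivity

/-- Outside `E₂` the colour `E₀` is the complement of `E₁`, so a column witnessing farness in
`E₀` also separates in `E₁`. -/
theorem Far.exists_separating {δ : ℝ} {a b : ℕ} {Bad : Finset ℕ} (hfar : G.Far δ a b)
    (ha : a ∈ G.left) (hb : b ∈ G.left) (haBad : Nbhd G.right G.E2 a ⊆ Bad)
    (hbBad : Nbhd G.right G.E2 b ⊆ Bad) (hBad : (Bad.card : ℝ) ≤ δ * G.right.card) :
    ∃ v ∈ G.right \ Bad, ¬((a, v) ∈ G.E1 ↔ (b, v) ∈ G.E1) := by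
  rcases hfar with hfar | hfar <;>
  · obtain ⟨v, hvD, hvBad⟩ := Finset.exists_mem_notMem_of_card_lt_card
      (show Bad.card < _ by exact_mod_cast hBad.trans_lt hfar)
    rw [mem_symmDiff_Nbhd] at hvD
    refine ⟨v, Finset.mem_sdiff.mpr ⟨hvD.1, hvBad⟩, ?_⟩
    have hclean : ∀ {c}, Nbhd G.right G.E2 c ⊆ Bad → (c, v) ∉ G.E2 := fun hc h2 =>
      hvBad (hc (Finset.mem_filter.mpr ⟨hvD.1, h2⟩))
    have := G.mem_E0_iff_notMem_E1 ha hvD.1 (hclean haBad)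
    have := G.mem_E0_iff_notMem_E1 hb hvD.1 (hclean hbBad)
    tauto

theorem exists_irreducible_copy_of_pairwise_far {δ s : ℝ} {S : Finset ℕ} (hS : S ⊆ G.left)
    (hfar : (S : Set ℕ).Pairwise (G.Far δ))
    (hdeg : ∀ a ∈ S, ((Nbhd G.right G.E2 a).card : ℝ) ≤ s * G.right.card)
    (hs : S.card * s ≤ δ) :
    ∃ R : Bigraph, R.Irreducible ∧ R.left = S ∧ G.Copy01 R := by
  set Bad := S.biUnion (Nbhd G.right G.E2)
  have hBad : (Bad.card : ℝ) ≤ δ * G.right.card :=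
    calc (Bad.card : ℝ) ≤ ∑ a ∈ S, ((Nbhd G.right G.E2 a).card : ℝ) := by
          exact_mod_cast Finset.card_biUnion_le
      _ ≤ ∑ _a ∈ S, s * G.right.card := Finset.sum_le_sum hdeg
      _ ≤ δ * G.right.card := by
          rw [Finset.sum_const, nsmul_eq_mul, ← mul_assoc]
          exact mul_le_mul_of_nonneg_right hs (Nat.cast_nonneg _)
  refine G.exists_irreducible_copy_of_separatesE1 (T := G.right \ Bad) hS Finset.sdiff_subset
    (fun a ha v hv h2 => ?_) (fun a ha b hb hab => ?_)
  · obtain ⟨hv, hvBad⟩ := Finset.mem_sdiff.mp hv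
    exact hvBad (Finset.mem_biUnion.mpr ⟨a, ha, Finset.mem_filter.mpr ⟨hv, h2⟩⟩)
  · exact (hfar ha hb hab).exists_separating (hS ha) (hS hb) (Finset.subset_biUnion_of_mem _ ha)
      (Finset.subset_biUnion_of_mem _ hb) hBad

end ECBigraph

/-- Structure theorem for edge-colored bigraphs omitting all irreducible patterns. -/
theorem stmt_9 (C : ℕ) (hC : 1 ≤ C) (δ : ℝ) (hδ : 0 < δ) :
    ∃ eStar : ℝ, 0 < eStar ∧ ∀ ε : ℝ, 0 < ε → ε < eStar →
      ∀ G : ECBigraph,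
        (G.E2.card : ℝ) ≤ ε * G.left.card * G.right.card →
        (∀ R : Bigraph, R.Irreducible → R.left.card = C → ¬ G.Copy01 R) →
        ∃ m : ℕ, m < C ∧ ∃ x : Fin m → ℕ, (∀ i, x i ∈ G.left) ∧
          ∃ U₀ ⊆ G.left, (U₀.card : ℝ) ≤ Real.sqrt ε * G.left.card ∧
            ∀ u ∈ G.left \ U₀,
              ((Nbhd G.right G.E2 u).card : ℝ) ≤ Real.sqrt ε * G.right.card ∧
              ∃ i : Fin m,
                (((Nbhd G.right G.E1 u \ Nbhd G.right G.E1 (x i)) ∪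
                  (Nbhd G.right G.E1 (x i) \ Nbhd G.right G.E1 u)).card : ℝ) ≤
                    δ * G.right.card ∧
                (((Nbhd G.right G.E0 u \ Nbhd G.right G.E0 (x i)) ∪
                  (Nbhd G.right G.E0 (x i) \ Nbhd G.right G.E0 u)).card : ℝ) ≤
                    δ * G.right.card := by
  have hC0 : (0 : ℝ) < C := by exact_mod_cast hC
  refine ⟨(δ / C) ^ 2, by positivity, fun ε hε hεlt G hE2 hforb => ?_⟩
  set s := Real.sqrt ε
  have hs : 0 < s := Real.sqrt_pos.mpr hε
  have hCs : C * s ≤ δ := by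
    have := (Real.sqrt_lt' (by positivity)).mpr hεlt
    rw [lt_div_iff₀ hC0] at this
    linarith
  set U₀ := G.left.filter fun u => s * G.right.card < (Nbhd G.right G.E2 u).card
  have hU₀ : (U₀.card : ℝ) ≤ s * G.left.card :=
    card_filter_lt_card_Nbhd_le hs (by rwa [Real.sq_sqrt hε.le])
  have hdeg : ∀ u ∈ G.left \ U₀, ((Nbhd G.right G.E2 u).card : ℝ) ≤ s * G.right.card :=
    fun u hu => by simpa [U₀, (Finset.mem_sdiff.mp hu).1] using (Finset.mem_sdiff.mp hu).2
  obtain ⟨M, hMU, hMfar, hMnear⟩ := (G.left \ U₀).exists_maximal_pairwise (r := G.Far δ)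
    (fun _ _ => ECBigraph.Far.symm) (G.not_far_self hδ.le)
  have hMC : M.card < C := by
    by_contra! hCM
    obtain ⟨S, hSM, hSC⟩ := M.exists_subset_card_eq hCM
    obtain ⟨R, hR, hRS, hcopy⟩ := G.exists_irreducible_copy_of_pairwise_far
      ((hSM.trans hMU).trans Finset.sdiff_subset) (hMfar.mono (Finset.coe_subset.mpr hSM))
      (fun a ha => hdeg a (hMU (hSM ha))) (by rwa [hSC])
    exact hforb R hR (hRS ▸ hSC) hcopy
  refine ⟨M.card, hMC, fun i => M.equivFin.symm i,
    fun i => (Finset.mem_sdiff.mp (hMU (M.equivFin.symm i).2)).1,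
    U₀, Finset.filter_subset _ _, hU₀, fun u hu => ⟨hdeg u hu, ?_⟩⟩
  obtain ⟨b, hb, hnear⟩ := hMnear u hu
  refine ⟨M.equivFin ⟨b, hb⟩, ?_⟩
  simpa only [Equiv.symm_apply_apply, ECBigraph.Far, symmDiff_def, Finset.sup_eq_union, not_or,
    not_lt] using hnear
end
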